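/- arXiv:1601.04986 — 2 statements merged into one kernel-verified Lean document; each statement's English description precedes it below -/
import Mathlib

section
/- Let W^i_j = g^{ik} h_{kj} where g is a symmetric positive-definite n×n matrix and h is a symmetric n×n matrix. Then for the elementary symmetric functions E_a of W one has the symmetry h_{ij} · ∂E_a/∂W^k_j = h_{kj} · ∂E_a/∂W^i_j (summation over j). -/
open Polynomial

/-- `elemSym n a W` : the `a`-th elementary symmetric function of the eigenvalues of the
`n × n` matrix `W`, i.e. the coefficient of `t ^ a` in `det (1 + t • W)`. -/
noncomputable def elemSym (n a : ℕ) (W : Matrix (Fin n) (Fin n) ℝ) : ℝ :=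
  (((1 : Matrix (Fin n) (Fin n) ℝ[X]) + (X : ℝ[X]) • W.map C).det).coeff a

/-- Partial derivative of `elemSym n a` with respect to the `(i,j)` matrix entry. -/
noncomputable def elemSymDeriv (n a : ℕ) (W : Matrix (Fin n) (Fin n) ℝ) (i j : Fin n) : ℝ :=
  deriv (fun t : ℝ => elemSym n a (W + t • Matrix.single i j 1)) 0

open Matrix

lemma real_adj_symm {n : ℕ} (g h W : Matrix (Fin n) (Fin n) ℝ)
    (hg : g.PosDef) (hh : h.IsSymm) (hW : W = g⁻¹ * h) (x : ℝ)
    (hx : IsUnit (1 + x • W).det) :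
    (h * (1 + x • W).adjugate)ᵀ = h * (1 + x • W).adjugate := by
  set B : Matrix (Fin n) (Fin n) ℝ := 1 + x • W with hB
  have hgT : gᵀ = g := by
    have := hg.1
    rwa [Matrix.IsHermitian, conjTranspose_eq_transpose_of_trivial] at this
  have hWT : Wᵀ = h * g⁻¹ := by
    rw [hW, transpose_mul, hh.eq, transpose_nonsing_inv, hgT]
  have key : Bᵀ * h = h * B := by
    rw [hB, transpose_add, transpose_one, transpose_smul, hWT, hW]
    rw [add_mul, mul_add, one_mul, mul_one, smul_mul_assoc, mul_smul_comm, mul_assoc]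
  have hxT : IsUnit Bᵀ.det := by rwa [det_transpose]
  have e1 : Bᵀ * (Bᵀ.adjugate * h) * B = B.det • (h * B) := by
    rw [← mul_assoc, mul_adjugate, det_transpose, smul_mul_assoc,
      smul_mul_assoc, one_mul]
  have e2 : Bᵀ * (h * B.adjugate) * B = B.det • (h * B) := by
    rw [← mul_assoc Bᵀ h B.adjugate, mul_assoc (Bᵀ * h), adjugate_mul, mul_smul_comm,
      mul_one, key]
  have cancel : ∀ Y : Matrix (Fin n) (Fin n) ℝ, Bᵀ⁻¹ * (Bᵀ * Y * B) * B⁻¹ = Y := by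
    intro Y
    rw [mul_assoc Bᵀ Y B, ← mul_assoc Bᵀ⁻¹, nonsing_inv_mul _ hxT, one_mul, mul_assoc,
      mul_nonsing_inv _ hx, mul_one]
  have main : Bᵀ.adjugate * h = h * B.adjugate := by
    rw [← cancel (Bᵀ.adjugate * h), e1, ← e2, cancel]
  calc (h * B.adjugate)ᵀ = B.adjugateᵀ * hᵀ := transpose_mul _ _
    _ = Bᵀ.adjugate * h := by rw [adjugate_transpose, hh.eq]
    _ = h * B.adjugate := main

lemma poly_adj_symm {n : ℕ} (g h W : Matrix (Fin n) (Fin n) ℝ)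
    (hg : g.PosDef) (hh : h.IsSymm) (hW : W = g⁻¹ * h) :
    ((h.map C) * (1 + (X : ℝ[X]) • W.map C).adjugate)ᵀ
      = (h.map C) * (1 + (X : ℝ[X]) • W.map C).adjugate := by
  set M : Matrix (Fin n) (Fin n) ℝ[X] := 1 + (X : ℝ[X]) • W.map C with hM
  have hev : ∀ x : ℝ, (Polynomial.evalRingHom x).mapMatrix M = 1 + x • W := by
    intro x
    ext p q
    simp [hM, Matrix.add_apply, Matrix.smul_apply, Matrix.one_apply, Matrix.map_apply,
      RingHom.mapMatrix_apply, apply_ite (eval x)]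
    ring
  have hdet0 : (M.det).eval 0 = 1 := by
    have := eval_det_add_X_smul (1 : Matrix (Fin n) (Fin n) ℝ[X]) W
    simpa [hM] using this
  have hdet : M.det ≠ 0 := fun h0 => by simp [h0] at hdet0
  have hinf : Set.Infinite {x : ℝ | (M.det).eval x ≠ 0} := by
    have hfin : Set.Finite {x : ℝ | (M.det).IsRoot x} := Polynomial.finite_setOf_isRoot hdet
    exact hfin.infinite_compl
  refine Matrix.ext fun i k => ?_
  rw [Matrix.transpose_apply]
  apply Polynomial.eq_of_infinite_eval_eq
  apply hinf.mono
  intro x hx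
  simp only [Set.mem_setOf_eq] at hx ⊢
  have hdx : (1 + x • W).det = (M.det).eval x := by
    rw [← hev x, ← RingHom.map_det]
    rfl
  have hxu : IsUnit (1 + x • W).det := by
    rw [hdx]; exact isUnit_iff_ne_zero.2 hx
  have hsym := real_adj_symm g h W hg hh hW x hxu
  have key2 : (Polynomial.evalRingHom x).mapMatrix ((h.map C) * M.adjugate)
      = h * (1 + x • W).adjugate := by
    rw [_root_.map_mul]
    congr 1
    · ext p q
      simp [RingHom.mapMatrix_apply, Matrix.map_apply]
    · rw [RingHom.map_adjugate, hev]
  have entry : ∀ p q : Fin n,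
      eval x (((h.map C) * M.adjugate) p q) = (h * (1 + x • W).adjugate) p q := by
    intro p q
    rw [← key2]
    rfl
  rw [entry, entry]
  calc (h * (1 + x • W).adjugate) k i = (h * (1 + x • W).adjugate)ᵀ i k := rfl
    _ = (h * (1 + x • W).adjugate) i k := by rw [hsym]

lemma elemSymDeriv_eq {n : ℕ} (a : ℕ) (W : Matrix (Fin n) (Fin n) ℝ) (k j : Fin n) :
    elemSymDeriv n a W k j
      = ((X : ℝ[X]) * (1 + (X : ℝ[X]) • W.map C).adjugate j k).coeff a := by
  set M : Matrix (Fin n) (Fin n) ℝ[X] := 1 + (X : ℝ[X]) • W.map C with hM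
  set c : ℝ := ((X : ℝ[X]) * M.adjugate j k).coeff a with hc
  have hfun : ∀ t : ℝ, elemSym n a (W + t • Matrix.single k j 1)
      = (M.det).coeff a + t * c := by
    intro t
    have hmat : (1 : Matrix (Fin n) (Fin n) ℝ[X])
          + (X : ℝ[X]) • (W + t • Matrix.single k j 1).map C
        = M.updateRow k (M k + (C t * X) • (Pi.single j 1 : Fin n → ℝ[X])) := by
      refine Matrix.ext fun p q => ?_
      by_cases hp : p = k
      · subst hp
        by_cases hq : q = j
        · subst hq
          simp [hM, Matrix.updateRow_apply, Matrix.add_apply, Matrix.smul_apply,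
            Matrix.map_apply, Matrix.one_apply, Matrix.single, Pi.single_apply]
          ring
        · simp [hM, Matrix.updateRow_apply, Matrix.add_apply, Matrix.smul_apply,
            Matrix.map_apply, Matrix.one_apply, Matrix.single, Pi.single_apply,
            Ne.symm hq, hq]
      · simp [hM, Matrix.updateRow_apply, Matrix.add_apply, Matrix.smul_apply,
          Matrix.map_apply, Matrix.one_apply, Matrix.single, Pi.single_apply,
          hp, Ne.symm hp]
    simp only [elemSym]
    rw [hmat, Matrix.det_updateRow_add, Matrix.updateRow_eq_self,
      Matrix.det_updateRow_smul, ← Matrix.adjugate_apply]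
    rw [Polynomial.coeff_add]
    congr 1
    rw [show (C t * X) * M.adjugate j k = C t * ((X : ℝ[X]) * M.adjugate j k) by ring,
      Polynomial.coeff_C_mul, hc]
  have hd : HasDerivAt (fun t : ℝ => (M.det).coeff a + t * c) (1 * c) 0 :=
    ((hasDerivAt_id 0).mul_const c).const_add _
  have heq : elemSymDeriv n a W k j = deriv (fun t : ℝ => (M.det).coeff a + t * c) 0 := by
    rw [elemSymDeriv]
    congr 1
    funext t
    exact hfun t
  rw [heq, hd.deriv, one_mul, hc]

/-- For W = g⁻¹ h with g symmetric positive definite and h symmetric,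
h_{ij} ∂E_a/∂W^k_j = h_{kj} ∂E_a/∂W^i_j. -/
theorem stmt2 (n a : ℕ) (g h W : Matrix (Fin n) (Fin n) ℝ)
    (hg : g.PosDef) (hh : h.IsSymm) (hW : W = g⁻¹ * h) (i k : Fin n) :
    ∑ j, h i j * elemSymDeriv n a W k j = ∑ j, h k j * elemSymDeriv n a W i j := by
  set M : Matrix (Fin n) (Fin n) ℝ[X] := 1 + (X : ℝ[X]) • W.map C with hM
  have key : ∀ p q : Fin n, ∑ j, h p j * elemSymDeriv n a W q j
      = ((X : ℝ[X]) * ((h.map C) * M.adjugate) p q).coeff a := by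
    intro p q
    calc ∑ j', h p j' * elemSymDeriv n a W q j'
        = ∑ j', ((X : ℝ[X]) * (h.map C p j' * M.adjugate j' q)).coeff a := by
          refine Finset.sum_congr rfl fun j' _ => ?_
          rw [elemSymDeriv_eq, show (X : ℝ[X]) * (h.map C p j' * M.adjugate j' q)
              = C (h p j') * ((X : ℝ[X]) * M.adjugate j' q) by
            simp [Matrix.map_apply]; ring, Polynomial.coeff_C_mul]
      _ = ((X : ℝ[X]) * ((h.map C) * M.adjugate) p q).coeff a := by
          rw [Matrix.mul_apply, Finset.mul_sum, Polynomial.finset_sum_coeff]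
  rw [key i k, key k i]
  have hsym := poly_adj_symm g h W hg hh hW
  have hik : ((h.map C) * M.adjugate) i k = ((h.map C) * M.adjugate) k i := by
    calc ((h.map C) * M.adjugate) i k = ((h.map C) * M.adjugate)ᵀ k i := rfl
      _ = ((h.map C) * M.adjugate) k i := by rw [hsym]
  rw [hik]
end

section
/- Let W^i_j = g^{ik} h_{kj} with g symmetric positive definite and h symmetric. Then ∂E_a/∂W^i_j = g_{ik} g^{jl} ∂E_a/∂W^l_k, i.e. the derivative matrix of E_a with indices lowered/raised by g is symmetric under this operation. -/
open Polynomial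

noncomputable def uPoly (n a : ℕ) : MvPolynomial (Fin n × Fin n) ℝ :=
  (((1 : Matrix (Fin n) (Fin n) (MvPolynomial (Fin n × Fin n) ℝ)[X]) +
      (X : (MvPolynomial (Fin n × Fin n) ℝ)[X]) •
        (Matrix.of fun i j => (MvPolynomial.X (i, j) : MvPolynomial (Fin n × Fin n) ℝ)).map C).det).coeff a

lemma elemSym_eq_eval (n a : ℕ) (W : Matrix (Fin n) (Fin n) ℝ) :
    elemSym n a W = MvPolynomial.eval (fun p => W p.1 p.2) (uPoly n a) := by
  set φ := (MvPolynomial.eval (fun p : Fin n × Fin n => W p.1 p.2)) with hφ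
  have h1 : ∀ p : (MvPolynomial (Fin n × Fin n) ℝ)[X],
      φ (p.coeff a) = ((mapRingHom φ) p).coeff a := fun p => by
    simp [coe_mapRingHom, Polynomial.coeff_map]
  rw [uPoly, h1, RingHom.map_det, elemSym]
  have hm : (((1 : Matrix (Fin n) (Fin n) (MvPolynomial (Fin n × Fin n) ℝ)[X]) +
      (X : (MvPolynomial (Fin n × Fin n) ℝ)[X]) •
        (Matrix.of fun i j => (MvPolynomial.X (i, j) : MvPolynomial (Fin n × Fin n) ℝ)).map C).map
          (mapRingHom φ)) = 1 + (X : ℝ[X]) • W.map C := by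
    ext i j
    simp [Matrix.map_apply, Matrix.add_apply, Matrix.smul_apply, Matrix.one_apply,
      apply_ite, hφ]
  rw [RingHom.mapMatrix_apply, hm]

lemma deriv_eval_line (n a : ℕ) (w m : Fin n × Fin n → ℝ) :
    deriv (fun t : ℝ => MvPolynomial.eval (w + t • m) (uPoly n a)) 0 =
      fderiv ℝ (fun w => MvPolynomial.eval w (uPoly n a)) w m := by
  have hd : DifferentiableAt ℝ (fun w : Fin n × Fin n → ℝ => MvPolynomial.eval w (uPoly n a)) w :=
    ((AnalyticOnNhd.eval_mvPolynomial (uPoly n a)) w (Set.mem_univ w)).differentiableAt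
  have h2 : HasDerivAt (fun t : ℝ => w + t • m) m 0 := by
    simpa using ((hasDerivAt_id (0:ℝ)).smul_const m).const_add w
  have hF : HasFDerivAt (fun w : Fin n × Fin n → ℝ => MvPolynomial.eval w (uPoly n a))
      (fderiv ℝ (fun w => MvPolynomial.eval w (uPoly n a)) w) (w + (0:ℝ) • m) := by
    simpa using hd.hasFDerivAt
  exact (hF.comp_hasDerivAt 0 h2).deriv

lemma deriv_elemSym_line (n a : ℕ) (W M : Matrix (Fin n) (Fin n) ℝ) :
    deriv (fun t : ℝ => elemSym n a (W + t • M)) 0 =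
      fderiv ℝ (fun w => MvPolynomial.eval w (uPoly n a)) (fun p => W p.1 p.2)
        (fun p => M p.1 p.2) := by
  have h : ∀ t : ℝ, elemSym n a (W + t • M) =
      MvPolynomial.eval ((fun p : Fin n × Fin n => W p.1 p.2) + t • fun p => M p.1 p.2)
        (uPoly n a) := by
    intro t
    rw [elemSym_eq_eval]
    rfl
  simp_rw [h]
  exact deriv_eval_line n a _ _


lemma deriv_line_sum (n a : ℕ) (W M : Matrix (Fin n) (Fin n) ℝ) :
    deriv (fun t : ℝ => elemSym n a (W + t • M)) 0 =
      ∑ l, ∑ k, M l k * elemSymDeriv n a W l k := by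
  have hD : ∀ l k : Fin n, elemSymDeriv n a W l k =
      fderiv ℝ (fun w => MvPolynomial.eval w (uPoly n a)) (fun p => W p.1 p.2)
        (fun p => (Matrix.single l k (1:ℝ)) p.1 p.2) := fun l k =>
    deriv_elemSym_line n a W _
  rw [deriv_elemSym_line]
  set L := fderiv ℝ (fun w => MvPolynomial.eval w (uPoly n a)) (fun p => W p.1 p.2) with hL
  have hm : (fun p : Fin n × Fin n => M p.1 p.2) =
      ∑ l : Fin n, ∑ k : Fin n, M l k • (fun p : Fin n × Fin n =>
        (Matrix.single l k (1:ℝ)) p.1 p.2) := by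
    funext p
    simp only [Finset.sum_apply, Pi.smul_apply, smul_eq_mul, Matrix.single,
      Matrix.of_apply]
    simp [Finset.sum_ite_eq, ite_and]
  rw [hm]
  simp only [map_sum, map_smul, smul_eq_mul]
  exact Finset.sum_congr rfl fun l _ => Finset.sum_congr rfl fun k _ => by rw [hD l k]

open Matrix in
lemma elemSym_transpose (n a : ℕ) (A : Matrix (Fin n) (Fin n) ℝ) :
    elemSym n a Aᵀ = elemSym n a A := by
  unfold elemSym
  congr 1
  rw [← Matrix.det_transpose ((1 : Matrix (Fin n) (Fin n) ℝ[X]) + (X : ℝ[X]) • A.map C)]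
  congr 1
  rw [Matrix.transpose_add, Matrix.transpose_one, Matrix.transpose_smul, Matrix.transpose_map]

lemma elemSym_conj (n a : ℕ) (P Q A : Matrix (Fin n) (Fin n) ℝ) (hQP : Q * P = 1) :
    elemSym n a (Q * A * P) = elemSym n a A := by
  unfold elemSym
  congr 1
  have hQ1P : (Q.map (C : ℝ → ℝ[X])) * (P.map C) = 1 := by
    rw [← Matrix.map_mul (f := (C : ℝ →+* ℝ[X])), hQP,
      Matrix.map_one _ (map_zero C) (map_one C)]
  have h1 : (1 : Matrix (Fin n) (Fin n) ℝ[X]) + (X : ℝ[X]) • (Q * A * P).map C =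
      (Q.map C) * ((1 : Matrix (Fin n) (Fin n) ℝ[X]) + (X : ℝ[X]) • A.map C) * (P.map C) := by
    rw [Matrix.mul_add, Matrix.mul_one, Matrix.add_mul, hQ1P]
    congr 1
    rw [Matrix.mul_smul, Matrix.smul_mul, ← Matrix.map_mul (f := (C : ℝ →+* ℝ[X])),
      ← Matrix.map_mul (f := (C : ℝ →+* ℝ[X]))]
  have h2 : ((Q.map (C : ℝ → ℝ[X])).det) * ((P.map (C : ℝ → ℝ[X])).det) = 1 := by
    rw [← Matrix.det_mul, hQ1P, Matrix.det_one]
  rw [h1, Matrix.det_mul, Matrix.det_mul, mul_comm ((Q.map (C : ℝ → ℝ[X])).det) _,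
    mul_assoc, h2, mul_one]

/-- For W = g⁻¹ h with g symmetric positive definite and h symmetric,
∂E_a/∂W^i_j = g_{ik} g^{jl} ∂E_a/∂W^l_k. -/
theorem stmt3 (n a : ℕ) (g h W : Matrix (Fin n) (Fin n) ℝ)
    (hg : g.PosDef) (hh : h.IsSymm) (hW : W = g⁻¹ * h) (i j : Fin n) :
    elemSymDeriv n a W i j =
      ∑ k, ∑ l, g i k * g⁻¹ j l * elemSymDeriv n a W l k := by
  open Matrix in
  have hdet : IsUnit g.det := isUnit_iff_ne_zero.mpr hg.det_pos.ne'
  have hQP : g⁻¹ * g = 1 := Matrix.nonsing_inv_mul g hdet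
  have hgT : gᵀ = g := by
    have := hg.1
    simpa [Matrix.IsHermitian, Matrix.conjTranspose_eq_transpose_of_trivial] using this
  have hginvT : (g⁻¹)ᵀ = g⁻¹ := by rw [Matrix.transpose_nonsing_inv, hgT]
  have hWT : Wᵀ = h * g⁻¹ := by rw [hW, Matrix.transpose_mul, hh.eq, hginvT]
  have hsim : g⁻¹ * Wᵀ * g = W := by
    rw [hWT, hW, Matrix.mul_assoc, Matrix.mul_assoc, hQP, Matrix.mul_one]
  have hstdT : (Matrix.single i j (1:ℝ))ᵀ = Matrix.single j i 1 := by
    ext p q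
    simp [Matrix.transpose_apply, Matrix.single, and_comm]
  have key : ∀ t : ℝ, elemSym n a (W + t • Matrix.single i j 1) =
      elemSym n a (W + t • (g⁻¹ * Matrix.single j i 1 * g)) := by
    intro t
    rw [← elemSym_transpose]
    have h1 : (W + t • Matrix.single i j 1)ᵀ =
        Wᵀ + t • Matrix.single j i 1 := by
      rw [Matrix.transpose_add, Matrix.transpose_smul, hstdT]
    rw [h1, ← elemSym_conj n a g g⁻¹ (Wᵀ + t • Matrix.single j i 1) hQP]
    congr 1
    rw [Matrix.mul_add, Matrix.add_mul, hsim, Matrix.mul_smul, Matrix.smul_mul]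
  have hD : elemSymDeriv n a W i j =
      deriv (fun t : ℝ => elemSym n a (W + t • (g⁻¹ * Matrix.single j i 1 * g))) 0 := by
    rw [elemSymDeriv]
    simp_rw [key]
  rw [hD, deriv_line_sum]
  have hM : ∀ l k : Fin n, (g⁻¹ * Matrix.single j i (1:ℝ) * g : Matrix (Fin n) (Fin n) ℝ) l k = g⁻¹ l j * g i k := by
    intro l k
    simp only [Matrix.mul_apply, Matrix.single, Matrix.of_apply, ite_and, mul_ite,
      ite_mul, mul_one, mul_zero, one_mul, zero_mul, Finset.sum_ite_eq, Finset.sum_ite_eq',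
      Finset.mem_univ, if_true]
  rw [Finset.sum_comm]
  refine Finset.sum_congr rfl fun k _ => Finset.sum_congr rfl fun l _ => ?_
  rw [hM l k]
  have hsymm : g⁻¹ l j = g⁻¹ j l := by
    conv_lhs => rw [← hginvT, Matrix.transpose_apply]
  rw [hsymm]; ring
end
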